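/- Let G be a finite simple chordal graph that is not complete, with largest clique size d, and suppose all maximal cliques of G have cardinality d (i.e., the clique complex Δ(G) is pure). Then b_{κ̃(G)+1} = b_{κ̃(G)+2} = … = b_d. -/

import Mathlib

open Finset

/-- `G` is chordal: every cycle of length at least 4 has a chord, i.e. an edge
joining two non-consecutive vertices of the cycle. -/
def IsChordal {V : Type*} (G : SimpleGraph V) : Prop :=
  ∀ (n : ℕ), 4 ≤ n → ∀ f : ZMod n → V, Function.Injective f →
    (∀ i : ZMod n, G.Adj (f i) (f (i + 1))) →
    ∃ i j : ZMod n, i ≠ j ∧ i + 1 ≠ j ∧ j + 1 ≠ i ∧ G.Adj (f i) (f j)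

/-- The number of cliques of `G` with exactly `i` vertices. -/
noncomputable def cliqueCount {V : Type*} [Fintype V] (G : SimpleGraph V) (i : ℕ) : ℕ :=
  {s : Finset V | G.IsNClique i s}.ncard

/-- `W(G - Y)`: the number of connected components of the subgraph of `G` induced on the
complement of `Y`. -/
noncomputable def numComponents {V : Type*} [Fintype V] [DecidableEq V] (G : SimpleGraph V)
    (Y : Finset V) : ℕ :=
  Nat.card (G.induce (↑(Yᶜ) : Set V)).ConnectedComponent

/-- A vertex-cut of `G`: a set of vertices whose removal disconnects `G`. -/
def IsVertexCut {V : Type*} [Fintype V] [DecidableEq V] (G : SimpleGraph V) (Y : Finset V) :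
    Prop :=
  ¬ (G.induce (↑(Yᶜ) : Set V)).Connected

/-- The vertex connectivity `κ(G)`: the minimum cardinality of a vertex-cut. -/
noncomputable def vertexConnectivity {V : Type*} [Fintype V] [DecidableEq V]
    (G : SimpleGraph V) : ℕ :=
  sInf {k | ∃ Y : Finset V, IsVertexCut G Y ∧ Y.card = k}

/-- `s` is a maximal clique of `G`. -/
def IsMaxCliqueOf {V : Type*} (G : SimpleGraph V) (s : Finset V) : Prop :=
  G.IsClique (↑s : Set V) ∧ ∀ t : Finset V, G.IsClique (↑t : Set V) → s ⊆ t → s = t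

/-- A dominating `i`-clique of `G`: a set of `i`-cliques such that every maximal clique of
order at least `i` contains some member of the set. -/
def IsDominatingCliqueSet {V : Type*} (G : SimpleGraph V) (i : ℕ)
    (D : Finset (Finset V)) : Prop :=
  (∀ s ∈ D, G.IsNClique i s) ∧
    ∀ t : Finset V, IsMaxCliqueOf G t → i ≤ t.card → ∃ s ∈ D, s ⊆ t

/-- `d_i(G)`: the minimum cardinality of a dominating `i`-clique of `G`. -/
noncomputable def domNum {V : Type*} (G : SimpleGraph V) (i : ℕ) : ℕ :=
  sInf {k | ∃ D : Finset (Finset V), IsDominatingCliqueSet G i D ∧ D.card = k}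

/-- `κ̃(G)`: the maximum cardinality of the intersection of a pair of distinct maximal
cliques of `G`. -/
noncomputable def kappaTilde {V : Type*} [DecidableEq V] (G : SimpleGraph V) : ℕ :=
  sSup {k | ∃ C C' : Finset V, IsMaxCliqueOf G C ∧ IsMaxCliqueOf G C' ∧ C ≠ C' ∧
    (C ∩ C').card = k}

/-- `G` restricted to the vertex set `s` is a threshold graph: it can be built from a
one-vertex graph by repeatedly adding either an isolated vertex or a vertex adjacent to
all existing vertices. -/
inductive IsThresholdOn {V : Type*} [DecidableEq V] (G : SimpleGraph V) : Finset V → Prop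
  | single (v : V) : IsThresholdOn G {v}
  | isolated (s : Finset V) (v : V) (hv : v ∉ s) (hs : IsThresholdOn G s)
      (hiso : ∀ u ∈ s, ¬ G.Adj v u) : IsThresholdOn G (insert v s)
  | dominating (s : Finset V) (v : V) (hv : v ∉ s) (hs : IsThresholdOn G s)
      (hdom : ∀ u ∈ s, G.Adj v u) : IsThresholdOn G (insert v s)

/-- `G` is a threshold graph. -/
def IsThreshold {V : Type*} [Fintype V] [DecidableEq V] (G : SimpleGraph V) : Prop :=
  IsThresholdOn G Finset.univ

/-- `|C_i(G)|`: the number of maximal cliques of `G` with exactly `i` vertices. -/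
noncomputable def maxCliqueCount {V : Type*} [Fintype V] (G : SimpleGraph V) (i : ℕ) : ℕ :=
  {s : Finset V | IsMaxCliqueOf G s ∧ s.card = i}.ncard

/-- `s` is a maximal clique of `G` among the cliques contained in `W`, i.e. a facet of the
restriction of the clique complex of `G` to `W`. -/
def IsMaxCliqueWithin {V : Type*} (G : SimpleGraph V) (W : Finset V) (s : Finset V) : Prop :=
  s ⊆ W ∧ G.IsClique (↑s : Set V) ∧
    ∀ t : Finset V, t ⊆ W → G.IsClique (↑t : Set V) → s ⊆ t → s = t

/-- The restriction of the clique complex of `G` to `W` is pure: all its facets have the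
same cardinality. -/
def PureOn {V : Type*} (G : SimpleGraph V) (W : Finset V) : Prop :=
  ∀ s t : Finset V, IsMaxCliqueWithin G W s → IsMaxCliqueWithin G W t → s.card = t.card

/-!
A chordal graph has a simplicial vertex: by Dirac's argument a non-complete chordal graph has
two non-adjacent ones, since a minimal vertex separator of two non-adjacent vertices is a clique
(two non-adjacent separator vertices would lie on a chordless cycle through both sides).

Deleting a simplicial vertex `v` with neighbourhood `N` removes the cliques `v ∪ T`, `T ⊆ N`, and
changes the facets of the clique complex either by replacing the facet `N` with `v ∪ N`, or by
adding the facet `v ∪ N`, which meets a facet containing `N` exactly in `N`. By induction,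
`∑_σ x ^ |σ| = ∑_F (x + 1) ^ |F| - ∑_{k ∈ S} (x + 1) ^ k` (sum over all cliques `σ`, including
the empty one, and over all facets `F`), where each `k ∈ S` is the size of the intersection of two
distinct facets, so `k ≤ κ̃(G)`. When all `m` facets have `d` vertices this reads
`1 + (y - 1) ∑ b_i y ^ (i - 1) = m y ^ d - ∑_{k ∈ S} y ^ k` with `y = x + 1`, and comparing the
coefficients of `y ^ j` for `κ̃(G) < j < d` gives `b_j = b_(j+1)`.
-/

open SimpleGraph

theorem Finset.coe_sdiff_erase {V : Type*} [DecidableEq V] {W S : Finset V} {s : V} (hsW : s ∈ W)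
    (hsS : s ∈ S) : (↑W \ ↑(S.erase s) : Set V) = insert s (↑W \ ↑S) := by
  ext z
  by_cases hz : z = s <;> simp [hz, hsW, hsS]

namespace SimpleGraph

variable {V : Type*} {G : SimpleGraph V}

theorem spanningCoe_induce_adj {X : Set V} {u v : V} :
    (G.induce X).spanningCoe.Adj u v ↔ G.Adj u v ∧ u ∈ X ∧ v ∈ X := by
  simp [map_adj]

theorem spanningCoe_induce_mono {X Y : Set V} (h : X ⊆ Y) :
    (G.induce X).spanningCoe ≤ (G.induce Y).spanningCoe := fun _ _ hab ↦ by
  rw [spanningCoe_induce_adj] at hab ⊢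
  exact ⟨hab.1, h hab.2.1, h hab.2.2⟩

theorem Reachable.mem_of_forall_adj_mem {s : Set V} {u v : V} (h : G.Reachable u v)
    (hu : u ∈ s) (hs : ∀ ⦃a b⦄, a ∈ s → G.Adj a b → b ∈ s) : v ∈ s := by
  obtain ⟨p⟩ := h
  induction p with
  | nil => exact hu
  | cons hab _ ih => exact ih (hs hu hab)

theorem Reachable.mem_of_spanningCoe_induce {X : Set V} {u v : V}
    (h : (G.induce X).spanningCoe.Reachable u v) (hu : u ∈ X) : v ∈ X :=
  h.mem_of_forall_adj_mem hu fun _ _ _ hab ↦ (spanningCoe_induce_adj.1 hab).2.2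

theorem Walk.mem_of_mem_support_spanningCoe_induce {X : Set V} {u v w : V}
    (p : (G.induce X).spanningCoe.Walk u v) (hu : u ∈ X) (hw : w ∈ p.support) : w ∈ X := by
  classical
  exact (p.takeUntil w hw).reachable.mem_of_forall_adj_mem hu fun _ _ _ h ↦
    (spanningCoe_induce_adj.1 h).2.2

theorem Reachable.spanningCoe_induce_setOf_reachable {X : Set V} {x a : V}
    (h : (G.induce X).spanningCoe.Reachable x a) :
    (G.induce {u | (G.induce X).spanningCoe.Reachable x u}).spanningCoe.Reachable x a := by
  set A := {u | (G.induce X).spanningCoe.Reachable x u}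
  suffices a ∈ {u | (G.induce A).spanningCoe.Reachable x u ∧ u ∈ A} from this.1
  refine h.mem_of_forall_adj_mem (s := {u | _ ∧ u ∈ A}) ⟨.refl x, .refl x⟩ fun u w hu huw ↦ ?_
  have hw : w ∈ A := hu.2.trans huw.reachable
  have huw' := spanningCoe_induce_adj.2 ⟨(spanningCoe_induce_adj.1 huw).1, hu.2, hw⟩
  exact ⟨hu.1.trans huw'.reachable, hw⟩

theorem reachable_spanningCoe_induce_insert_insert {C : Set V} {s t a₀ a₁ : V}
    (hs : G.Adj s a₀) (ht : G.Adj t a₁) (ha₀ : a₀ ∈ C) (ha₁ : a₁ ∈ C)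
    (h : (G.induce C).spanningCoe.Reachable a₀ a₁) :
    (G.induce (insert s (insert t C))).spanningCoe.Reachable s t := by
  have hC : C ⊆ insert s (insert t C) := (Set.subset_insert _ _).trans (Set.subset_insert _ _)
  exact (spanningCoe_induce_adj.2 ⟨hs, by simp, hC ha₀⟩).reachable.trans <|
    (h.mono (spanningCoe_induce_mono hC)).trans
      (spanningCoe_induce_adj.2 ⟨ht.symm, hC ha₁, by simp⟩).reachable

theorem exists_adj_reachable_of_reachable_insert {X : Set V} {s x y : V} (hx : x ∈ X)
    (hsep : ¬ (G.induce X).spanningCoe.Reachable x y)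
    (h : (G.induce (insert s X)).spanningCoe.Reachable x y) :
    ∃ a, G.Adj s a ∧ (G.induce X).spanningCoe.Reachable x a := by
  by_contra! hs
  refine hsep <| h.mem_of_forall_adj_mem (s := {u | (G.induce X).spanningCoe.Reachable x u})
    (Reachable.refl x) fun a b ha hab' ↦ ?_
  obtain ⟨hab, -, hb⟩ := spanningCoe_induce_adj.1 hab'
  have hbs : b ≠ s := by rintro rfl; exact hs a hab.symm ha
  exact ha.trans <| Adj.reachable <| spanningCoe_induce_adj.2
    ⟨hab, ha.mem_of_spanningCoe_induce hx, hb.resolve_left hbs⟩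

theorem Walk.isChordless_of_length_eq_dist {u v : V} (p : G.Walk u v)
    (hp : p.length = G.dist u v) : p.IsChordless := by
  suffices h : ∀ i j, i < j → j ≤ p.length → G.Adj (p.getVert i) (p.getVert j) →
      s(p.getVert i, p.getVert j) ∈ p.edges by
    refine isChordless_iff_forall_mem_edges.2 fun a b ha hb hab ↦ ?_
    obtain ⟨i, rfl, hi⟩ := mem_support_iff_exists_getVert.1 ha
    obtain ⟨j, rfl, hj⟩ := mem_support_iff_exists_getVert.1 hb
    rcases lt_trichotomy i j with hij | rfl | hij
    · exact h i j hij hj hab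
    · exact absurd hab (G.loopless.irrefl _)
    · exact Sym2.eq_swap ▸ h j i hij hi hab.symm
  intro i j hij hj hadj
  obtain rfl | hij : j = i + 1 ∨ i + 2 ≤ j := by omega
  · exact p.mk_mem_edges_iff_exists.2 ⟨i, by omega, rfl⟩
  · -- a chord would shortcut the geodesic
    have := dist_le ((p.take i).append (cons hadj (p.drop j)))
    simp only [length_append, take_length, length_cons, drop_length] at this
    omega

theorem Walk.isChordless_mapLe_of_length_eq_dist {X : Set V} {u v : V}
    (p : (G.induce X).spanningCoe.Walk u v) (hu : u ∈ X)
    (hp : p.length = (G.induce X).spanningCoe.dist u v) :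
    (p.mapLe (spanningCoe_induce_le G X)).IsChordless := by
  refine isChordless_iff_forall_mem_edges.2 fun a b ha hb hab ↦ ?_
  rw [support_mapLe_eq_support] at ha hb
  rw [edges_mapLe_eq_edges]
  exact (p.isChordless_of_length_eq_dist hp).mem_edges ha hb <| spanningCoe_induce_adj.2
    ⟨hab, p.mem_of_mem_support_spanningCoe_induce hu ha,
      p.mem_of_mem_support_spanningCoe_induce hu hb⟩

end SimpleGraph

theorem IsChordal.not_isChordless_of_isCycle {V : Type*} {G : SimpleGraph V} (hG : IsChordal G)
    {u : V} {c : G.Walk u u} (hc : c.IsCycle) (hlen : 4 ≤ c.length) : ¬ c.IsChordless := by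
  intro hcl
  set n := c.length
  have : NeZero n := ⟨by omega⟩
  let f : ZMod n → V := fun i ↦ c.getVert i.val
  have hf : ∀ m ≤ n, f m = c.getVert m := by
    intro m hm
    simp only [f, ZMod.val_natCast]
    rcases hm.lt_or_eq with h | rfl
    · rw [Nat.mod_eq_of_lt h]
    · rw [Nat.mod_self, Walk.getVert_zero, Walk.getVert_length]
  have hf_succ (i : ZMod n) : f (i + 1) = c.getVert (i.val + 1) := by
    rw [← hf _ i.val_lt, Nat.cast_add_one, ZMod.natCast_zmod_val]
  have hinj : Function.Injective f := fun i j h ↦ ZMod.val_injective n <|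
    hc.getVert_injOn' (by simp; have := i.val_lt; omega) (by simp; have := j.val_lt; omega) h
  obtain ⟨i, j, hij, hij1, hji1, hadj⟩ := hG n hlen f hinj fun i ↦ by
    rw [hf_succ]; exact c.adj_getVert_succ i.val_lt
  obtain ⟨k, hk, hkij⟩ := c.mk_mem_edges_iff_exists.1 <|
    hcl.mem_edges (c.getVert_mem_support _) (c.getVert_mem_support _) hadj
  rw [← hf k hk.le, ← hf (k + 1) hk, Nat.cast_add_one] at hkij
  change s(f k, f (k + 1)) = s(f i, f j) at hkij
  rcases Sym2.eq_iff.1 hkij with ⟨hki, hkj⟩ | ⟨hkj, hki⟩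
  · exact hij1 (hinj hki ▸ hinj hkj)
  · exact hji1 (hinj hkj ▸ hinj hki)

theorem IsChordal.adj_of_reachable_through_separated_sets {V : Type*} {G : SimpleGraph V}
    (hG : IsChordal G) {A B : Set V} {s t : V} (hst : s ≠ t) (hAB : Disjoint A B)
    (hnadj : ∀ a ∈ A, ∀ b ∈ B, ¬ G.Adj a b)
    (hA : (G.induce (insert s (insert t A))).spanningCoe.Reachable s t)
    (hB : (G.induce (insert s (insert t B))).spanningCoe.Reachable s t) : G.Adj s t := by
  by_contra hadj
  -- A geodesic through `A ∪ {s, t}` and one through `B ∪ {s, t}` form a chordless cycle.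
  have geodesic : ∀ {C : Set V}, (G.induce (insert s (insert t C))).spanningCoe.Reachable s t →
      ∃ q : G.Walk s t, q.IsPath ∧ q.IsChordless ∧ 2 ≤ q.length ∧
        ∀ w ∈ q.support, w = s ∨ w = t ∨ w ∈ C := by
    intro C hC
    obtain ⟨p, hp⟩ := hC.exists_walk_length_eq_dist
    refine ⟨p.mapLe (spanningCoe_induce_le _ _), (p.isPath_of_length_eq_dist hp).mapLe _,
      p.isChordless_mapLe_of_length_eq_dist (Set.mem_insert s _) hp, ?_, fun w hw ↦ ?_⟩
    · rw [Walk.length_mapLe, hp]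
      exact hC.one_lt_dist_of_ne_of_not_adj hst fun h ↦ hadj (spanningCoe_induce_adj.1 h).1
    · rw [Walk.support_mapLe_eq_support] at hw
      exact p.mem_of_mem_support_spanningCoe_induce (Set.mem_insert s _) hw
  obtain ⟨qA, hqA, hqA', hlenA, hsuppA⟩ := geodesic hA
  obtain ⟨qB, hqB, hqB', hlenB, hsuppB⟩ := geodesic hB
  have cross : ∀ a ∈ qA.support, ∀ b ∈ qB.support, G.Adj a b →
      a ∈ qB.support ∨ b ∈ qA.support := by
    intro a ha b hb hab
    by_contra! h
    rcases hsuppA a ha with rfl | rfl | ha' <;> [exact h.1 qB.start_mem_support;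
      exact h.1 qB.end_mem_support; skip]
    rcases hsuppB b hb with rfl | rfl | hb' <;> [exact h.2 qA.start_mem_support;
      exact h.2 qA.end_mem_support; exact hnadj a ha' b hb' hab]
  have hc : (qA.append qB.reverse).IsCycle := by
    refine hqA.isCycle_append hqB.reverse (fun z hzA hzB ↦ ?_) (Or.inl (by omega))
    have hzs : z ≠ s := by
      rintro rfl
      exact (List.nodup_cons.1 (qA.cons_tail_support ▸ hqA.support_nodup)).1 hzA
    have hzt : z ≠ t := by
      rintro rfl
      exact (List.nodup_cons.1 (qB.reverse.cons_tail_support ▸ hqB.reverse.support_nodup)).1 hzB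
    have hzA' := hsuppA z (List.mem_of_mem_tail hzA)
    have hzB' := hsuppB z (by simpa using List.mem_of_mem_tail hzB)
    simp only [hzs, hzt, false_or] at hzA' hzB'
    exact hAB.ne_of_mem hzA' hzB' rfl
  refine hG.not_isChordless_of_isCycle hc (by simp; omega) <|
    Walk.isChordless_iff_forall_mem_edges.2 fun a b ha hb hab ↦ ?_
  simp only [Walk.mem_support_append_iff, Walk.support_reverse, List.mem_reverse] at ha hb
  simp only [Walk.edges_append, Walk.edges_reverse, List.mem_append, List.mem_reverse]
  rcases ha with ha | ha <;> rcases hb with hb | hb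
  · exact .inl (hqA'.mem_edges ha hb hab)
  · rcases cross a ha b hb hab with ha' | hb'
    · exact .inr (hqB'.mem_edges ha' hb hab)
    · exact .inl (hqA'.mem_edges ha hb' hab)
  · rcases cross b hb a ha hab.symm with hb' | ha'
    · exact .inr (hqB'.mem_edges ha hb' hab)
    · exact .inl (hqA'.mem_edges ha' hb hab)
  · exact .inr (hqB'.mem_edges ha hb hab)

/-! ### Minimal separators and simplicial vertices -/

namespace SimpleGraph

variable {V : Type*} {G : SimpleGraph V}

def IsSimplicialIn (G : SimpleGraph V) (W : Set V) (v : V) : Prop :=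
  v ∈ W ∧ G.IsClique (G.neighborSet v ∩ W)

theorem IsSimplicialIn.of_subset {W W' : Set V} {v : V} (h : G.IsSimplicialIn W' v)
    (hW' : W' ⊆ W) (hN : G.neighborSet v ∩ W ⊆ W') : G.IsSimplicialIn W v :=
  And.intro (hW' h.1) (h.2.subset (Set.subset_inter Set.inter_subset_left hN))

def IsCliqueOrHasNonadjSimplicialPair (G : SimpleGraph V) (W : Set V) : Prop :=
  G.IsClique W ∨ ∃ a ∈ W, ∃ b ∈ W, a ≠ b ∧ ¬ G.Adj a b ∧ G.IsSimplicialIn W a ∧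
    G.IsSimplicialIn W b

theorem exists_isSimplicialIn_of_not_reachable {W S : Finset V}
    (ih : ∀ T ⊂ W, G.IsCliqueOrHasNonadjSimplicialPair T) (hSW : S ⊆ W)
    (hS : G.IsClique (S : Set V)) {x y : V} (hx : x ∈ W) (hxS : x ∉ S) (hy : y ∈ W)
    (hyS : y ∉ S) (hsep : ¬ (G.induce (↑W \ ↑S)).spanningCoe.Reachable x y) :
    ∃ a, (G.induce (↑W \ ↑S)).spanningCoe.Reachable x a ∧ G.IsSimplicialIn W a := by
  classical
  set H := (G.induce (↑W \ ↑S)).spanningCoe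
  have hxX : x ∈ (↑W \ ↑S : Set V) := ⟨hx, hxS⟩
  set T := W.filter (H.Reachable x) ∪ S
  have hTW : T ⊂ W := (Finset.ssubset_iff_of_subset (Finset.union_subset
    (Finset.filter_subset _ _) hSW)).2 ⟨y, hy, by simp [hsep, hyS]⟩
  have hlift : ∀ a, H.Reachable x a → G.IsSimplicialIn T a → G.IsSimplicialIn W a := by
    refine fun a ha haT ↦ haT.of_subset (Finset.coe_subset.2 hTW.subset) fun w ⟨haw, hw⟩ ↦ ?_
    by_cases hwS : w ∈ S
    · exact Finset.mem_union_right _ hwS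
    · refine Finset.mem_union_left _ (Finset.mem_filter.2 ⟨hw, ha.trans ?_⟩)
      exact (spanningCoe_induce_adj.2 ⟨haw, ha.mem_of_spanningCoe_induce hxX, hw, hwS⟩).reachable
  rcases ih T hTW with hT | ⟨a, ha, b, hb, hab, hnadj, hsa, hsb⟩
  · refine ⟨x, .refl x, hlift x (.refl x) ⟨?_, hT.subset Set.inter_subset_right⟩⟩
    exact Finset.mem_union_left _ (Finset.mem_filter.2 ⟨hx, .refl x⟩)
  · -- `a` and `b` are not both in the clique `S`
    rcases Finset.mem_union.1 ha with ha' | haS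
    · exact ⟨a, (Finset.mem_filter.1 ha').2, hlift a (Finset.mem_filter.1 ha').2 hsa⟩
    rcases Finset.mem_union.1 hb with hb' | hbS
    · exact ⟨b, (Finset.mem_filter.1 hb').2, hlift b (Finset.mem_filter.1 hb').2 hsb⟩
    exact absurd (hS haS hbS hab) hnadj

end SimpleGraph

theorem IsChordal.isCliqueOrHasNonadjSimplicialPair {V : Type*}
    {G : SimpleGraph V} (hG : IsChordal G) (W : Finset V) :
    G.IsCliqueOrHasNonadjSimplicialPair W := by
  classical
  induction W using Finset.strongInduction with | H W ih
  by_cases hW : G.IsClique (W : Set V)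
  · exact .inl hW
  right
  obtain ⟨x, hx, y, hy, hxy, hnxy⟩ : ∃ x ∈ W, ∃ y ∈ W, x ≠ y ∧ ¬ G.Adj x y := by
    simpa [IsClique, Set.Pairwise] using hW
  let H (T : Finset V) := (G.induce (↑W \ ↑T)).spanningCoe
  let Separates (T : Finset V) := T ⊆ W ∧ x ∉ T ∧ y ∉ T ∧ ¬ (H T).Reachable x y
  have hsep₀ : Separates ((W.erase x).erase y) := by
    refine ⟨(Finset.erase_subset _ _).trans (Finset.erase_subset _ _), by simp, by simp,
      fun h ↦ hxy (Eq.symm ?_)⟩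
    refine h.mem_of_forall_adj_mem (s := {x}) rfl fun a b (ha : a = x) hab' ↦ ?_
    obtain ⟨hab, -, hbW, hb⟩ := spanningCoe_induce_adj.1 hab'
    subst ha
    simp only [Finset.coe_erase, Set.mem_sdiff_singleton, hbW, true_and,
      not_and, not_not] at hb
    exact absurd (hb hab.ne' ▸ hab) hnxy
  obtain ⟨S, hSmem, hSmin⟩ := Finset.exists_min_image (W.powerset.filter Separates)
    Finset.card ⟨_, Finset.mem_filter.2 ⟨Finset.mem_powerset.2 hsep₀.1, hsep₀⟩⟩
  obtain ⟨hSW, hxS, hyS, hsep⟩ := (Finset.mem_filter.1 hSmem).2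
  have hxX : x ∈ (↑W \ ↑S : Set V) := ⟨hx, hxS⟩
  have hyX : y ∈ (↑W \ ↑S : Set V) := ⟨hy, hyS⟩
  -- by minimality of `S`, putting back any `s ∈ S` reconnects `x` and `y`
  have hmin : ∀ s ∈ S, (G.induce (insert s (↑W \ ↑S))).spanningCoe.Reachable x y := by
    intro s hs
    rw [← Finset.coe_sdiff_erase (hSW hs) hs]
    by_contra h
    have := hSmin (S.erase s) (Finset.mem_filter.2 ⟨Finset.mem_powerset.2
      ((Finset.erase_subset _ _).trans hSW), (Finset.erase_subset _ _).trans hSW,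
      fun h' ↦ hxS (Finset.mem_of_mem_erase h'), fun h' ↦ hyS (Finset.mem_of_mem_erase h'), h⟩)
    rw [Finset.card_erase_of_mem hs] at this
    have := Finset.card_pos.2 ⟨s, hs⟩
    omega
  set A := {u | (H S).Reachable x u}
  set B := {u | (H S).Reachable y u}
  have hAB : Disjoint A B := Set.disjoint_left.2 fun z hzA hzB ↦ hsep (hzA.trans hzB.symm)
  have hnadj : ∀ a ∈ A, ∀ b ∈ B, ¬ G.Adj a b := fun a ha b hb hab ↦ hsep <|
    (ha.trans (spanningCoe_induce_adj.2 ⟨hab, ha.mem_of_spanningCoe_induce hxX,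
      hb.mem_of_spanningCoe_induce hyX⟩).reachable).trans hb.symm
  have hS : G.IsClique (S : Set V) := by
    intro s hs t ht hst
    obtain ⟨a₀, hs₀, hx₀⟩ := exists_adj_reachable_of_reachable_insert hxX hsep (hmin s hs)
    obtain ⟨a₁, ht₁, hx₁⟩ := exists_adj_reachable_of_reachable_insert hxX hsep (hmin t ht)
    obtain ⟨b₀, hs₀', hy₀⟩ := exists_adj_reachable_of_reachable_insert hyX
      (fun h ↦ hsep h.symm) (hmin s hs).symm
    obtain ⟨b₁, ht₁', hy₁⟩ := exists_adj_reachable_of_reachable_insert hyX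
      (fun h ↦ hsep h.symm) (hmin t ht).symm
    exact hG.adj_of_reachable_through_separated_sets hst hAB hnadj
      (reachable_spanningCoe_induce_insert_insert hs₀ ht₁ hx₀ hx₁ <|
        hx₀.spanningCoe_induce_setOf_reachable.symm.trans hx₁.spanningCoe_induce_setOf_reachable)
      (reachable_spanningCoe_induce_insert_insert hs₀' ht₁' hy₀ hy₁ <|
        hy₀.spanningCoe_induce_setOf_reachable.symm.trans hy₁.spanningCoe_induce_setOf_reachable)
  obtain ⟨a, ha, hsa⟩ := exists_isSimplicialIn_of_not_reachable ih hSW hS hx hxS hy hyS hsep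
  obtain ⟨b, hb, hsb⟩ := exists_isSimplicialIn_of_not_reachable ih hSW hS hy hyS hx hxS
    fun h ↦ hsep h.symm
  exact ⟨a, hsa.1, b, hsb.1, fun h ↦ hAB.ne_of_mem ha hb h, hnadj a ha b hb, hsa, hsb⟩

theorem IsChordal.exists_isSimplicialIn {V : Type*} {G : SimpleGraph V}
    (hG : IsChordal G) {W : Finset V} (hW : W.Nonempty) : ∃ v, G.IsSimplicialIn W v := by
  rcases hG.isCliqueOrHasNonadjSimplicialPair W with h | ⟨a, -, -, -, -, -, ha, -⟩
  · obtain ⟨v, hv⟩ := hW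
    exact ⟨v, hv, h.subset Set.inter_subset_right⟩
  · exact ⟨a, ha⟩

/-! ### Simplicial elimination and the clique polynomial -/

namespace SimpleGraph

variable {V : Type*} (G : SimpleGraph V)

open Classical in
noncomputable def cliquesWithin (W : Finset V) : Finset (Finset V) :=
  W.powerset.filter fun s ↦ G.IsClique (s : Set V)

open Classical in
noncomputable def maxCliquesWithin (W : Finset V) : Finset (Finset V) :=
  W.powerset.filter (IsMaxCliqueWithin G W)

def IsMaxCliqueIntersectionCard [DecidableEq V] (W : Finset V) (k : ℕ) : Prop :=
  ∃ C C', IsMaxCliqueWithin G W C ∧ IsMaxCliqueWithin G W C' ∧ C ≠ C' ∧ (C ∩ C').card = k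

variable {G} {W : Finset V}

theorem mem_cliquesWithin {s : Finset V} :
    s ∈ G.cliquesWithin W ↔ s ⊆ W ∧ G.IsClique (s : Set V) := by
  simp [cliquesWithin]

theorem mem_maxCliquesWithin {C : Finset V} :
    C ∈ G.maxCliquesWithin W ↔ IsMaxCliqueWithin G W C := by
  simpa [maxCliquesWithin] using fun h ↦ h.1

theorem exists_isMaxCliqueWithin_superset {N : Finset V} (hNW : N ⊆ W)
    (hN : G.IsClique (N : Set V)) : ∃ C, IsMaxCliqueWithin G W C ∧ N ⊆ C := by
  obtain ⟨C, hNC, hC⟩ := (G.cliquesWithin W).exists_le_maximal (mem_cliquesWithin.2 ⟨hNW, hN⟩)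
  obtain ⟨hCW, hCc⟩ := mem_cliquesWithin.1 hC.1
  refine ⟨C, ⟨hCW, hCc, fun t htW htc hCt ↦ ?_⟩, hNC⟩
  exact hCt.antisymm (hC.2 (mem_cliquesWithin.2 ⟨htW, htc⟩) hCt)

variable [DecidableEq V] [DecidableRel G.Adj] {v : V}

theorem IsSimplicialIn.isClique_insert_filter (hv : G.IsSimplicialIn W v) :
    G.IsClique ((insert v ((W.erase v).filter (G.Adj v)) : Finset V) : Set V) := by
  rw [Finset.coe_insert, isClique_insert]
  refine ⟨hv.2.subset fun u hu ↦ ?_, fun u hu _ ↦ (Finset.mem_filter.1 hu).2⟩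
  obtain ⟨hu, hvu⟩ := Finset.mem_filter.1 hu
  exact ⟨hvu, Finset.mem_of_mem_erase hu⟩

theorem subset_insert_filter_of_mem {t : Finset V} (htW : t ⊆ W) (ht : G.IsClique (t : Set V))
    (hvt : v ∈ t) : t ⊆ insert v ((W.erase v).filter (G.Adj v)) := by
  intro u hu
  rcases eq_or_ne u v with rfl | huv
  · exact Finset.mem_insert_self _ _
  · exact Finset.mem_insert_of_mem <| Finset.mem_filter.2
      ⟨Finset.mem_erase.2 ⟨huv, htW hu⟩, ht hvt hu huv.symm⟩

theorem IsSimplicialIn.isMaxCliqueWithin_iff (hv : G.IsSimplicialIn W v) {C : Finset V} :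
    IsMaxCliqueWithin G W C ↔ C = insert v ((W.erase v).filter (G.Adj v)) ∨
      (C ≠ (W.erase v).filter (G.Adj v) ∧ IsMaxCliqueWithin G (W.erase v) C) := by
  set N := (W.erase v).filter (G.Adj v)
  have hvW : v ∈ W := hv.1
  have hKW : insert v N ⊆ W :=
    Finset.insert_subset hvW ((Finset.filter_subset _ _).trans (Finset.erase_subset _ _))
  have hK := hv.isClique_insert_filter
  have hvN : v ∉ N := fun h ↦ by simp [N] at h
  constructor
  · rintro ⟨hCW, hC, hCmax⟩
    by_cases hvC : v ∈ C
    · exact .inl (hCmax _ hKW hK (subset_insert_filter_of_mem hCW hC hvC))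
    have hCW' : C ⊆ W.erase v := fun u hu ↦ Finset.mem_erase.2 ⟨by rintro rfl; exact hvC hu, hCW hu⟩
    refine .inr ⟨?_, hCW', hC, fun t htW ht hCt ↦
      hCmax t (htW.trans (Finset.erase_subset _ _)) ht hCt⟩
    rintro rfl
    exact hvN ((hCmax _ hKW hK (Finset.subset_insert _ _)) ▸ Finset.mem_insert_self v _)
  · rintro (rfl | ⟨hCN, hCW, hC, hCmax⟩)
    · exact ⟨hKW, hK, fun t htW ht hKt ↦ hKt.antisymm
        (subset_insert_filter_of_mem htW ht (hKt (Finset.mem_insert_self _ _)))⟩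
    refine ⟨hCW.trans (Finset.erase_subset _ _), hC, fun t htW ht hCt ↦ ?_⟩
    by_cases hvt : v ∈ t
    · -- then `C ⊆ N`, so maximality of `C` in `W.erase v` forces `C = N`
      have hCN' : C ⊆ N := fun u hu ↦ by
        have := subset_insert_filter_of_mem htW ht hvt (hCt hu)
        rcases Finset.mem_insert.1 this with rfl | h
        · exact absurd (hCW hu) (Finset.notMem_erase _ _)
        · exact h
      exact absurd (hCmax N (Finset.filter_subset _ _)
        (hK.subset (Finset.coe_subset.2 (Finset.subset_insert _ _))) hCN') hCN
    · exact hCmax t (fun u hu ↦ Finset.mem_erase.2 ⟨by rintro rfl; exact hvt hu, htW hu⟩) ht hCt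

theorem IsSimplicialIn.sum_cliquesWithin {R : Type*} [CommSemiring R] (hv : G.IsSimplicialIn W v)
    (x : R) : ∑ s ∈ G.cliquesWithin W, x ^ s.card = ∑ s ∈ G.cliquesWithin (W.erase v), x ^ s.card +
      x * (x + 1) ^ ((W.erase v).filter (G.Adj v)).card := by
  set N := (W.erase v).filter (G.Adj v)
  have hvN : v ∉ N := fun h ↦ by simp [N] at h
  have hNW : N ⊆ W.erase v := Finset.filter_subset _ _
  -- a clique through `v` is `v` together with a subset of `N`
  have hsplit : G.cliquesWithin W = G.cliquesWithin (W.erase v) ∪ N.powerset.image (insert v) := by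
    ext s
    simp only [Finset.mem_union, mem_cliquesWithin, Finset.mem_image, Finset.mem_powerset]
    constructor
    · rintro ⟨hsW, hs⟩
      by_cases hvs : v ∈ s
      · exact .inr ⟨s.erase v, Finset.subset_insert_iff.1 (subset_insert_filter_of_mem hsW hs hvs),
          Finset.insert_erase hvs⟩
      · exact .inl ⟨Finset.subset_erase.2 ⟨hsW, hvs⟩, hs⟩
    · rintro (⟨hsW, hs⟩ | ⟨T, hTN, rfl⟩)
      · exact ⟨hsW.trans (Finset.erase_subset _ _), hs⟩
      · have hTK : insert v T ⊆ insert v N := Finset.insert_subset_insert v hTN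
        exact ⟨hTK.trans (Finset.insert_subset hv.1 (hNW.trans (Finset.erase_subset _ _))),
          hv.isClique_insert_filter.subset (Finset.coe_subset.2 hTK)⟩
  have hdisj : Disjoint (G.cliquesWithin (W.erase v)) (N.powerset.image (insert v)) := by
    refine Finset.disjoint_right.2 fun s hs hs' ↦ ?_
    obtain ⟨T, -, rfl⟩ := Finset.mem_image.1 hs
    exact Finset.notMem_erase v W ((mem_cliquesWithin.1 hs').1 (Finset.mem_insert_self v T))
  have hinj : Set.InjOn (insert v) (N.powerset : Set (Finset V)) := fun T₁ h₁ T₂ h₂ h ↦ by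
    have hv₁ : v ∉ T₁ := fun h ↦ hvN (Finset.mem_powerset.1 h₁ h)
    have hv₂ : v ∉ T₂ := fun h ↦ hvN (Finset.mem_powerset.1 h₂ h)
    rw [← Finset.erase_insert hv₁, ← Finset.erase_insert hv₂, h]
  rw [hsplit, Finset.sum_union hdisj, Finset.sum_image hinj, ← Finset.sum_pow_mul_eq_add_pow,
    Finset.mul_sum]
  congr 1
  refine Finset.sum_congr rfl fun T hT ↦ ?_
  rw [Finset.card_insert_of_notMem fun h ↦ hvN (Finset.mem_powerset.1 hT h)]
  ring

theorem IsSimplicialIn.maxCliquesWithin_eq (hv : G.IsSimplicialIn W v) :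
    G.maxCliquesWithin W = insert (insert v ((W.erase v).filter (G.Adj v)))
      ((G.maxCliquesWithin (W.erase v)).erase ((W.erase v).filter (G.Adj v))) := by
  ext C
  rw [Finset.mem_insert, Finset.mem_erase, mem_maxCliquesWithin, mem_maxCliquesWithin,
    hv.isMaxCliqueWithin_iff]

theorem IsSimplicialIn.isMaxCliqueIntersectionCard_of_erase (hv : G.IsSimplicialIn W v) {k : ℕ}
    (h : G.IsMaxCliqueIntersectionCard (W.erase v) k) : G.IsMaxCliqueIntersectionCard W k := by
  set N := (W.erase v).filter (G.Adj v)
  obtain ⟨C, C', hC, hC', hne, rfl⟩ := h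
  have hvC : v ∉ C := fun h ↦ Finset.notMem_erase v W (hC.1 h)
  have hvC' : v ∉ C' := fun h ↦ Finset.notMem_erase v W (hC'.1 h)
  have hK : IsMaxCliqueWithin G W (insert v N) := hv.isMaxCliqueWithin_iff.2 (.inl rfl)
  by_cases hCN : C = N
  · subst hCN
    refine ⟨_, C', hK, hv.isMaxCliqueWithin_iff.2 (.inr ⟨Ne.symm hne, hC'⟩),
      fun h ↦ hvC' (h ▸ Finset.mem_insert_self v _), by rw [Finset.insert_inter_of_notMem hvC']⟩
  by_cases hC'N : C' = N
  · subst hC'N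
    refine ⟨C, _, hv.isMaxCliqueWithin_iff.2 (.inr ⟨hCN, hC⟩), hK,
      fun h ↦ hvC (h ▸ Finset.mem_insert_self v _), by rw [Finset.inter_insert_of_notMem hvC]⟩
  exact ⟨C, C', hv.isMaxCliqueWithin_iff.2 (.inr ⟨hCN, hC⟩),
    hv.isMaxCliqueWithin_iff.2 (.inr ⟨hC'N, hC'⟩), hne, rfl⟩

end SimpleGraph

theorem IsChordal.exists_sum_cliquesWithin_eq {V : Type*} [DecidableEq V] {G : SimpleGraph V}
    (hG : IsChordal G) (R : Type*) [CommRing R] (W : Finset V) :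
    ∃ S : Multiset ℕ, (∀ k ∈ S, G.IsMaxCliqueIntersectionCard W k) ∧ ∀ x : R,
      ∑ s ∈ G.cliquesWithin W, x ^ s.card =
        ∑ C ∈ G.maxCliquesWithin W, (x + 1) ^ C.card - (S.map ((x + 1) ^ ·)).sum := by
  classical
  induction W using Finset.strongInduction with | H W ih
  rcases W.eq_empty_or_nonempty with rfl | hW
  · have hsub : ∀ s : Finset V, s ⊆ ∅ ↔ s = ∅ := fun s ↦ Finset.subset_empty
    have hcl : G.cliquesWithin ∅ = {∅} := by
      ext s
      simp only [mem_cliquesWithin, hsub, Finset.mem_singleton, and_iff_left_iff_imp]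
      rintro rfl
      simp
    have hmax : G.maxCliquesWithin ∅ = {∅} := by
      ext s
      simp only [mem_maxCliquesWithin, Finset.mem_singleton]
      refine ⟨fun h ↦ hsub s |>.1 h.1, ?_⟩
      rintro rfl
      exact ⟨subset_rfl, by simp, fun t ht _ _ ↦ ((hsub t).1 ht).symm⟩
    exact ⟨0, by simp, fun x ↦ by simp [hcl, hmax]⟩
  obtain ⟨v, hv⟩ := hG.exists_isSimplicialIn hW
  obtain ⟨S, hS, hSx⟩ := ih (W.erase v) (Finset.erase_ssubset hv.1)
  set N := (W.erase v).filter (G.Adj v)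
  have hKnotMem : insert v N ∉ (G.maxCliquesWithin (W.erase v)).erase N := fun h ↦
    Finset.notMem_erase v W ((mem_maxCliquesWithin.1 (Finset.mem_of_mem_erase h)).1
      (Finset.mem_insert_self v N))
  have hKcard : (insert v N).card = N.card + 1 :=
    Finset.card_insert_of_notMem fun h ↦ by simp [N] at h
  by_cases hN : IsMaxCliqueWithin G (W.erase v) N
  · -- `N` is replaced by `insert v N`
    refine ⟨S, fun k hk ↦ hv.isMaxCliqueIntersectionCard_of_erase (hS k hk), fun x ↦ ?_⟩
    rw [hv.sum_cliquesWithin, hSx, hv.maxCliquesWithin_eq, Finset.sum_insert hKnotMem,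
      ← Finset.add_sum_erase _ _ (mem_maxCliquesWithin.2 hN), hKcard]
    ring
  · -- `insert v N` is a new maximal clique, meeting a maximal clique `C ⊇ N` of `W.erase v` in `N`
    obtain ⟨C, hC, hNC⟩ := exists_isMaxCliqueWithin_superset (Finset.filter_subset _ _)
      (hv.isClique_insert_filter.subset (Finset.coe_subset.2 (Finset.subset_insert v N)))
    have hvC : v ∉ C := fun h ↦ Finset.notMem_erase v W (hC.1 h)
    have hnew : G.IsMaxCliqueIntersectionCard W N.card :=
      ⟨_, C, hv.isMaxCliqueWithin_iff.2 (.inl rfl),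
        hv.isMaxCliqueWithin_iff.2 (.inr ⟨by rintro rfl; exact hN hC, hC⟩),
        fun h ↦ hvC (h ▸ Finset.mem_insert_self v N),
        by rw [Finset.insert_inter_of_notMem hvC, Finset.inter_eq_left.2 hNC]⟩
    refine ⟨N.card ::ₘ S, Multiset.forall_mem_cons.2 ⟨hnew,
      fun k hk ↦ hv.isMaxCliqueIntersectionCard_of_erase (hS k hk)⟩, fun x ↦ ?_⟩
    rw [hv.sum_cliquesWithin, hSx, hv.maxCliquesWithin_eq, Finset.sum_insert hKnotMem,
      Finset.erase_eq_of_notMem (mt mem_maxCliquesWithin.1 hN), Multiset.map_cons,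
      Multiset.sum_cons, hKcard]
    ring

/-! ### The b-vector of a pure clique complex -/

namespace SimpleGraph

variable {V : Type*} {G : SimpleGraph V}

theorem isMaxCliqueWithin_univ_iff [Fintype V] {C : Finset V} :
    IsMaxCliqueWithin G Finset.univ C ↔ IsMaxCliqueOf G C :=
  ⟨fun ⟨_, hC, hmax⟩ ↦ ⟨hC, fun t ht hCt ↦ hmax t (Finset.subset_univ t) ht hCt⟩,
    fun ⟨hC, hmax⟩ ↦ ⟨Finset.subset_univ C, hC, fun t _ ht hCt ↦ hmax t ht hCt⟩⟩

theorem IsMaxCliqueIntersectionCard.le_kappaTilde [Fintype V] [DecidableEq V] {k : ℕ}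
    (h : G.IsMaxCliqueIntersectionCard Finset.univ k) : k ≤ kappaTilde G := by
  obtain ⟨C, C', hC, hC', hne, rfl⟩ := h
  refine le_csSup ⟨Fintype.card V, ?_⟩ ⟨C, C', isMaxCliqueWithin_univ_iff.1 hC,
    isMaxCliqueWithin_univ_iff.1 hC', hne, rfl⟩
  rintro _ ⟨D, D', -, -, -, rfl⟩
  exact (Finset.card_le_card Finset.inter_subset_left).trans (Finset.card_le_univ D)

theorem sum_cliquesWithin_univ_pow [Fintype V] {R : Type*} [CommSemiring R] {d : ℕ}
    (hd : ∀ (m : ℕ) (s : Finset V), G.IsNClique m s → m ≤ d) (x : R) :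
    ∑ s ∈ G.cliquesWithin Finset.univ, x ^ s.card =
      1 + x * ∑ i ∈ Finset.Icc 1 d, (cliqueCount G i : R) * x ^ (i - 1) := by
  classical
  have hcount :
      ∀ i, ((G.cliquesWithin Finset.univ).filter (·.card = i)).card = cliqueCount G i := by
    intro i
    rw [cliqueCount, ← Set.ncard_coe_finset]
    congr 1
    ext s
    simp [mem_cliquesWithin, isNClique_iff]
  have hmaps : ∀ s ∈ G.cliquesWithin Finset.univ, s.card ∈ insert 0 (Finset.Icc 1 d) := by
    intro s hs
    have := hd s.card s ⟨(mem_cliquesWithin.1 hs).2, rfl⟩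
    simp only [Finset.mem_insert, Finset.mem_Icc]
    omega
  rw [← Finset.sum_fiberwise_of_maps_to hmaps, Finset.sum_insert (by simp), Finset.mul_sum]
  congr 1
  · rw [Finset.sum_congr rfl fun s hs ↦ by rw [(Finset.mem_filter.1 hs).2], Finset.sum_const,
      hcount]
    simp [cliqueCount, isNClique_zero]
  · refine Finset.sum_congr rfl fun i hi ↦ ?_
    rw [Finset.sum_congr rfl fun s hs ↦ by rw [(Finset.mem_filter.1 hs).2], Finset.sum_const,
      hcount, nsmul_eq_mul, ← mul_assoc, mul_comm x, mul_assoc, ← pow_succ',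
      Nat.sub_add_cancel (Finset.mem_Icc.1 hi).1]

end SimpleGraph

open Polynomial in
theorem eq_of_forall_one_add_sub_one_mul_eq {b : ℕ → ℤ} {d m κ : ℕ} {S : Multiset ℕ}
    (hS : ∀ k ∈ S, k ≤ κ)
    (h : ∀ y : ℤ, 1 + (y - 1) * ∑ i ∈ Finset.Icc 1 d, b i * y ^ (i - 1) =
      m * y ^ d - (S.map (y ^ ·)).sum)
    {i : ℕ} (hi : κ < i) (hid : i ≤ d) : b i = b d := by
  set B : ℤ[X] := ∑ i ∈ Finset.Icc 1 d, C (b i) * X ^ (i - 1)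
  have hB : (X - 1) * B = C (m : ℤ) * X ^ d - (S.map (X ^ ·)).sum - 1 := by
    refine Polynomial.funext fun y ↦ ?_
    have hS : ((S.map (X ^ ·)).sum : ℤ[X]).eval y = (S.map (y ^ ·)).sum := by
      rw [← coe_evalRingHom, map_multiset_sum, Multiset.map_map]
      simp [Function.comp_def]
    simp only [eval_mul, eval_sub, eval_X, eval_one, eval_C, eval_pow, hS, B, eval_finsetSum]
    linarith [h y]
  have hBcoeff : ∀ j < d, B.coeff j = b (j + 1) := by
    intro j hj
    simp only [B, finsetSum_coeff, coeff_C_mul, coeff_X_pow]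
    rw [Finset.sum_eq_single (j + 1) (fun i hi hij ↦ by simp at hi; simp [show j ≠ i - 1 by omega])
      (by simp; omega)]
    simp
  -- comparing coefficients of `X ^ (j + 1)`
  have hstep : ∀ j, κ ≤ j → j + 1 < d → B.coeff j = B.coeff (j + 1) := by
    intro j hj hjd
    have := congrArg (coeff · (j + 1)) hB
    have hS : ((S.map (X ^ ·)).sum : ℤ[X]).coeff (j + 1) = 0 := by
      rw [← lcoeff_apply, map_multiset_sum, Multiset.map_map]
      refine Multiset.sum_eq_zero fun z hz ↦ ?_
      obtain ⟨k, hk, rfl⟩ := Multiset.mem_map.1 hz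
      simp [coeff_X_pow, show j + 1 ≠ k by have := hS k hk; omega]
    simp only [sub_mul, one_mul, coeff_sub, coeff_X_mul, coeff_C_mul, coeff_X_pow, hS,
      coeff_one] at this
    simp [show j + 1 ≠ d by omega] at this
    linarith
  have hconst : ∀ j, i - 1 ≤ j → j < d → B.coeff (i - 1) = B.coeff j := by
    intro j hj
    induction j, hj using Nat.le_induction with
    | base => exact fun _ ↦ rfl
    | succ j hj ih => exact fun hjd ↦ (ih (by omega)).trans (hstep j (by omega) hjd)
  have := hconst (d - 1) (by omega) (by omega)
  rwa [hBcoeff _ (by omega), hBcoeff _ (by omega), Nat.sub_add_cancel (by omega),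
    Nat.sub_add_cancel (by omega)] at this

theorem stmt18_general {V : Type} [Fintype V] [DecidableEq V] (G : SimpleGraph V)
    (hch : IsChordal G)
    (d : ℕ)
    (hdmax : ∀ (m : ℕ) (s : Finset V), G.IsNClique m s → m ≤ d)
    (hpure : ∀ s : Finset V, IsMaxCliqueOf G s → s.card = d)
    (b : ℕ → ℤ)
    (hb : ∀ x : ℤ, ∑ i ∈ Finset.Icc 1 d, b i * (x + 1) ^ (i - 1) =
      ∑ i ∈ Finset.Icc 1 d, (cliqueCount G i : ℤ) * x ^ (i - 1))
    (i : ℕ) (hi1 : kappaTilde G < i) (hi2 : i ≤ d) :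
    b i = b d := by
  obtain ⟨S, hS, hSx⟩ := hch.exists_sum_cliquesWithin_eq ℤ Finset.univ
  refine eq_of_forall_one_add_sub_one_mul_eq (m := (G.maxCliquesWithin Finset.univ).card)
    (fun k hk ↦ (hS k hk).le_kappaTilde) (fun y ↦ ?_) hi1 hi2
  have hmax : ∀ C ∈ G.maxCliquesWithin Finset.univ, (y - 1 + 1) ^ C.card = y ^ d := fun C hC ↦ by
    rw [sub_add_cancel, hpure C (isMaxCliqueWithin_univ_iff.1 (mem_maxCliquesWithin.1 hC))]
  calc 1 + (y - 1) * ∑ i ∈ Finset.Icc 1 d, b i * y ^ (i - 1)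
      = ∑ s ∈ G.cliquesWithin Finset.univ, (y - 1) ^ s.card := by
        rw [sum_cliquesWithin_univ_pow hdmax, ← hb, sub_add_cancel]
    _ = _ := by
        rw [hSx, Finset.sum_congr rfl hmax, Finset.sum_const, nsmul_eq_mul, sub_add_cancel]

/-- Let `G` be a non-complete chordal graph with largest clique size `d` whose clique
complex is pure (all maximal cliques have cardinality `d`). Then
`b (κ̃(G)+1) = b (κ̃(G)+2) = ⋯ = b d`. -/
theorem stmt18 {V : Type} [Fintype V] [DecidableEq V] (G : SimpleGraph V)
    (hnc : G ≠ ⊤) (hch : IsChordal G)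
    (d : ℕ) (hd : ∃ s : Finset V, G.IsNClique d s)
    (hdmax : ∀ (m : ℕ) (s : Finset V), G.IsNClique m s → m ≤ d)
    (hpure : ∀ s : Finset V, IsMaxCliqueOf G s → s.card = d)
    (b : ℕ → ℤ)
    (hb : ∀ x : ℤ, ∑ i ∈ Finset.Icc 1 d, b i * (x + 1) ^ (i - 1) =
      ∑ i ∈ Finset.Icc 1 d, (cliqueCount G i : ℤ) * x ^ (i - 1))
    (i : ℕ) (hi1 : kappaTilde G < i) (hi2 : i ≤ d) :
    b i = b d :=
  stmt18_general G hch d hdmax hpure b hb i hi1 hi2
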